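/- Let V and E be finite types and src, tgt : E → V maps with src e ≠ tgt e for every e ∈ E. Define the unsigned incidence matrix |A| : V × E → ℝ by |A|(v,e) = 1 if v = src e or v = tgt e, and |A|(v,e) = 0 otherwise. Assume the simple graph on V in which distinct vertices v, w are adjacent if and only if some edge e satisfies {src e, tgt e} = {v, w} is connected, and let S ⊆ V be a nonempty set of vertices. Then the rows {|A|(v,·) : v ∈ V, v ∉ S}, viewed as vectors in ℝ^E, are linearly independent. -/

import Mathlib

/-!
A vanishing combination `∑ c v • |A|(v, ·)` of rows says `c (src e) + c (tgt e) = 0` on every edge,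
so `c` changes sign along every edge of the underlying graph. Since `c` vanishes on `S` and the
graph is connected, `c` vanishes everywhere.
-/

theorem SimpleGraph.Reachable.eq_zero_of_forall_adj_add_eq_zero {V α : Type*} [AddGroup α]
    {G : SimpleGraph V} {c : V → α} (hc : ∀ v w, G.Adj v w → c v + c w = 0) {u v : V}
    (huv : G.Reachable u v) (hu : c u = 0) : c v = 0 := by
  obtain ⟨p⟩ := huv
  induction p with
  | nil => exact hu
  | cons hadj _ ih => exact ih (by simpa [hu] using hc _ _ hadj)

section UnsignedIncidence

variable (R : Type*) {V E : Type*} [Semiring R] [DecidableEq V]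

def unsignedIncidence (src tgt : E → V) (v : V) (e : E) : R :=
  if v = src e ∨ v = tgt e then 1 else 0

variable {R}

theorem linearCombination_unsignedIncidence_apply {src tgt : E → V} (l : V →₀ R) {e : E}
    (he : src e ≠ tgt e) :
    Finsupp.linearCombination R (unsignedIncidence R src tgt) l e = l (src e) + l (tgt e) := by
  have hsplit : ∀ v x, x * unsignedIncidence R src tgt v e =
      (if v = src e then x else 0) + (if v = tgt e then x else 0) := by
    intro v x
    unfold unsignedIncidence
    split_ifs <;> simp_all
  simp only [Finsupp.linearCombination_apply, Finsupp.sum_apply', Pi.smul_apply, smul_eq_mul,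
    hsplit, Finsupp.sum_add, Finsupp.sum_ite_self_eq']

end UnsignedIncidence

theorem reduced_unsigned_incidence_rows_linearIndependent_general
    (V E : Type*) [DecidableEq V]
    (src tgt : E → V)
    (G : SimpleGraph V)
    (hG : ∀ v w : V, G.Adj v w ↔ v ≠ w ∧ ∃ e, ({src e, tgt e} : Set V) = {v, w})
    (hconn : G.Connected)
    (absA : V → E → ℝ)
    (habsA : ∀ v e, absA v e = if v = src e ∨ v = tgt e then 1 else 0)
    (S : Set V) (hS : S.Nonempty) :
    LinearIndependent ℝ (fun v : {v : V // v ∉ S} => absA v.1) := by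
  obtain rfl : absA = unsignedIncidence ℝ src tgt := funext fun v => funext (habsA v)
  change LinearIndepOn ℝ _ Sᶜ
  refine linearIndepOn_iff.2 fun l hl hcomb => ?_
  have hadj : ∀ v w, G.Adj v w → l v + l w = 0 := by
    intro v w hvw
    obtain ⟨hne, e, he⟩ := (hG v w).1 hvw
    have hcol := congrFun hcomb e
    rcases Set.pair_eq_pair_iff.1 he with ⟨rfl, rfl⟩ | ⟨rfl, rfl⟩
    · rwa [linearCombination_unsignedIncidence_apply l hne] at hcol
    · rwa [linearCombination_unsignedIncidence_apply l hne.symm, add_comm] at hcol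
  obtain ⟨s, hs⟩ := hS
  ext v
  exact (hconn s v).eq_zero_of_forall_adj_add_eq_zero hadj
    ((Finsupp.mem_supported' ℝ l).1 hl s (Set.notMem_compl_iff.2 hs))

/-- For a connected gas network graph (finite directed graph without self-loops), the
unsigned incidence matrix with the rows corresponding to a nonempty set `S` of (slack)
vertices deleted has linearly independent rows. -/
theorem reduced_unsigned_incidence_rows_linearIndependent
    (V E : Type*) [Fintype V] [Fintype E] [DecidableEq V]
    (src tgt : E → V) (hloop : ∀ e, src e ≠ tgt e)
    (G : SimpleGraph V)
    (hG : ∀ v w : V, G.Adj v w ↔ v ≠ w ∧ ∃ e, ({src e, tgt e} : Set V) = {v, w})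
    (hconn : G.Connected)
    (absA : V → E → ℝ)
    (habsA : ∀ v e, absA v e = if v = src e ∨ v = tgt e then 1 else 0)
    (S : Set V) (hS : S.Nonempty) :
    LinearIndependent ℝ (fun v : {v : V // v ∉ S} => absA v.1) :=
  reduced_unsigned_incidence_rows_linearIndependent_general V E src tgt G hG hconn absA habsA S hS
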